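/- arXiv:1711.06660 — 3 statements merged into one kernel-verified Lean document; each statement's English description precedes it below -/
import Mathlib

section
/- If φ > 0 and η ≥ 1, then for every λ > 0, λ^(2η−1)/(λ^η+φ)² ≤ 1/(4φ^(1/η)) · (2η−1)^(2−1/η)/η² · 4 /4, i.e. sup over λ > 0 of λ^(2η−1)/(λ^η+φ)² ≤ (2η−1)^(2−1/η)/(4η²φ^(1/η)). -/
/-!
With `t = λ ^ η`, `p = 2 - 1/η` and `q = 1/η` (so `p + q = 2`), the claim is
`t ^ p * φ ^ q * 2 ^ 2 ≤ p ^ p * q ^ q * (t + φ) ^ 2`: weighted AM-GM for the weights `p/2, q/2`,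
raised to the power `2`.
-/

open Real

theorem Real.rpow_mul_rpow_mul_add_rpow_le {p q x y : ℝ} (hp : 0 < p) (hq : 0 < q)
    (hx : 0 ≤ x) (hy : 0 ≤ y) :
    x ^ p * y ^ q * (p + q) ^ (p + q) ≤ p ^ p * q ^ q * (x + y) ^ (p + q) := by
  set s := p + q
  have hs : 0 < s := by positivity
  have amgm : (s * x / p) ^ (p / s) * (s * y / q) ^ (q / s) ≤ x + y := by
    convert geom_mean_le_arith_mean2_weighted (div_nonneg hp.le hs.le) (div_nonneg hq.le hs.le)
      (by positivity : 0 ≤ s * x / p) (by positivity : 0 ≤ s * y / q)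
      (by rw [← add_div, div_self hs.ne']) using 1
    field_simp
  have hpow := rpow_le_rpow (by positivity) amgm hs.le
  rw [mul_rpow (by positivity) (by positivity), ← rpow_mul (by positivity),
    ← rpow_mul (by positivity), div_mul_cancel₀ _ hs.ne', div_mul_cancel₀ _ hs.ne',
    div_rpow (by positivity) hp.le, div_rpow (by positivity) hq.le,
    mul_rpow hs.le hx, mul_rpow hs.le hy, div_mul_div_comm, div_le_iff₀ (by positivity)] at hpow
  rw [rpow_add hs p q]
  linarith

theorem rpow_two_sub_inv_div_add_sq_le {η t φ : ℝ} (hη : 1 / 2 < η) (ht : 0 ≤ t) (hφ : 0 < φ) :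
    t ^ (2 - 1 / η) / (t + φ) ^ 2 ≤ (2 * η - 1) ^ (2 - 1 / η) / (4 * η ^ 2 * φ ^ (1 / η)) := by
  have hη0 : 0 < η := by linarith
  have hp : 2 - 1 / η = (2 * η - 1) / η := by field_simp
  have hp0 : 0 < 2 - 1 / η := by rw [hp]; apply div_pos <;> linarith
  have amgm := rpow_mul_rpow_mul_add_rpow_le hp0 (one_div_pos.2 hη0) ht hφ.le
  have hsum : 2 - 1 / η + 1 / η = 2 := by ring
  have hweights : (2 - 1 / η) ^ (2 - 1 / η) * (1 / η) ^ (1 / η)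
      = (2 * η - 1) ^ (2 - 1 / η) / η ^ 2 := by
    nth_rw 1 [hp]
    rw [div_rpow (by linarith) hη0.le, div_rpow zero_le_one hη0.le, one_rpow, div_mul_div_comm,
      mul_one, ← rpow_add hη0, hsum, rpow_two]
  rw [hsum, rpow_two, rpow_two, hweights, div_mul_eq_mul_div, le_div_iff₀ (by positivity)] at amgm
  rw [div_le_div_iff₀ (by positivity) (by positivity)]
  linarith

theorem stmt2 (η φ : ℝ) (hη : 1 ≤ η) (hφ : 0 < φ) :
    ∀ lam : ℝ, 0 < lam →
      lam ^ (2 * η - 1) / (lam ^ η + φ) ^ 2 ≤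
        (2 * η - 1) ^ (2 - 1 / η) / (4 * η ^ 2 * φ ^ (1 / η)) := by
  intro lam hlam
  have hsubst : lam ^ (2 * η - 1) = (lam ^ η) ^ (2 - 1 / η) := by
    rw [← rpow_mul hlam.le]
    congr 1
    field_simp
  rw [hsubst]
  exact rpow_two_sub_inv_div_add_sq_le (by linarith) (rpow_nonneg hlam.le η) hφ
end

section
/- Under the same setup, combining bounds yields the global sensitivity estimate: ‖(1/N)S(X−X′)‖²_CM ≤ (τ²/(N²φ^{1/η}))·((2η−1)^{2−1/η}/η²) ≤ 4τ²/(N²φ^{1/η}). -/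
open Real

/-! The Cameron–Martin weight `λ⁻¹` of each coordinate is compensated by the damping factor
`λ^η / (λ^η + φ)` of `S`: weighted AM–GM applied to `λ^η + φ` with weights `1 - 1/(2η)` and
`1/(2η)` bounds `λ⁻¹ (λ^η / (λ^η + φ))²` uniformly in `λ` by `(2η-1)^(2-1/η) / (4 η² φ^(1/η))`.
Bessel's inequality and `‖X - X'‖ ≤ 2τ` then give the first estimate, and
`(2η-1)^(2-1/η) ≤ (2η-1)² ≤ 4η²` the second. -/

theorem rpow_mul_rpow_one_sub_le {θ a b : ℝ} (hθ₀ : 0 < θ) (hθ₁ : θ < 1) (ha : 0 ≤ a)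
    (hb : 0 ≤ b) : a ^ θ * b ^ (1 - θ) ≤ θ ^ θ * (1 - θ) ^ (1 - θ) * (a + b) := by
  have hθ' : 0 < 1 - θ := sub_pos.mpr hθ₁
  have amgm := geom_mean_le_arith_mean2_weighted hθ₀.le hθ'.le (div_nonneg ha hθ₀.le)
    (div_nonneg hb hθ'.le) (add_sub_cancel θ 1)
  rw [mul_div_cancel₀ a hθ₀.ne', mul_div_cancel₀ b hθ'.ne', div_rpow ha hθ₀.le,
    div_rpow hb hθ'.le, div_mul_div_comm, div_le_iff₀ (by positivity)] at amgm
  linarith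

theorem inv_mul_div_rpow_add_sq_le {lam η φ : ℝ} (hlam : 0 < lam) (hη : 1 < 2 * η) (hφ : 0 < φ) :
    lam⁻¹ * (lam ^ η / (lam ^ η + φ)) ^ 2
      ≤ (2 * η - 1) ^ (2 - 1 / η) / η ^ 2 / (4 * φ ^ (1 / η)) := by
  have hη₀ : 0 < η := by linarith
  set t := lam ^ η with ht_def
  have ht : 0 < t := rpow_pos_of_pos hlam η
  -- the weights for which AM-GM is tight at the maximiser `t = (2 * η - 1) * φ`
  obtain ⟨θ, hθ⟩ : ∃ θ : ℝ, θ = (2 * η - 1) / (2 * η) := ⟨_, rfl⟩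
  have hθ₀ : 0 < θ := hθ ▸ div_pos (by linarith) (by linarith)
  have hθ₁ : θ < 1 := hθ ▸ (div_lt_one (by linarith)).mpr (by linarith)
  have hθ' : 1 - θ = (2 * η)⁻¹ := by rw [hθ]; field_simp; ring
  have hθ₂ : θ * (2 : ℕ) = 2 - 1 / η := by rw [hθ]; field_simp; push_cast; ring
  have hθ₂' : (1 - θ) * (2 : ℕ) = 1 / η := by rw [hθ']; field_simp; push_cast; ring
  have hsq := pow_le_pow_left₀ (by positivity)
    (rpow_mul_rpow_one_sub_le hθ₀ hθ₁ ht.le hφ.le) 2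
  have e₁ : (t ^ θ) ^ 2 = lam⁻¹ * t ^ 2 := by
    rw [← rpow_mul_natCast ht.le, hθ₂, ht_def, ← rpow_mul hlam.le, ← rpow_mul_natCast hlam.le,
      ← rpow_neg_one, ← rpow_add hlam]
    congr 1
    field_simp; push_cast; ring
  have e₂ : (φ ^ (1 - θ)) ^ 2 = φ ^ (1 / η) := by rw [← rpow_mul_natCast hφ.le, hθ₂']
  have e₃ : (θ ^ θ * (1 - θ) ^ (1 - θ)) ^ 2 = (2 * η - 1) ^ (2 - 1 / η) / (4 * η ^ 2) := by
    have h4 : (2 * η) ^ (2 - 1 / η) * (2 * η) ^ (1 / η) = 4 * η ^ 2 := by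
      rw [← rpow_add (by linarith), sub_add_cancel, rpow_two]; ring
    rw [mul_pow, ← rpow_mul_natCast hθ₀.le, ← rpow_mul_natCast (sub_pos.mpr hθ₁).le, hθ₂, hθ₂',
      hθ', hθ, div_rpow (by linarith) (by linarith), inv_rpow (by linarith), ← h4]
    field_simp
  rw [mul_pow, mul_pow, e₁, e₂, e₃] at hsq
  rw [div_pow, ← mul_div_assoc, div_le_div_iff₀ (by positivity) (by positivity)]
  calc lam⁻¹ * t ^ 2 * (4 * φ ^ (1 / η)) = 4 * (lam⁻¹ * t ^ 2 * φ ^ (1 / η)) := by ring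
    _ ≤ 4 * ((2 * η - 1) ^ (2 - 1 / η) / (4 * η ^ 2) * (t + φ) ^ 2) := by gcongr
    _ = (2 * η - 1) ^ (2 - 1 / η) / η ^ 2 * (t + φ) ^ 2 := by field_simp

theorem Orthonormal.tsum_mul_inner_sq_le {ι H : Type*} [Nonempty ι] [NormedAddCommGroup H]
    [InnerProductSpace ℝ H] {v : ι → H} (hv : Orthonormal ℝ v) {w : ι → ℝ} {K : ℝ}
    (hw₀ : ∀ i, 0 ≤ w i) (hwK : ∀ i, w i ≤ K) (x : H) :
    ∑' i, w i * inner ℝ x (v i) ^ 2 ≤ K * ‖x‖ ^ 2 := by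
  have hK : 0 ≤ K := (hw₀ (Classical.arbitrary ι)).trans (hwK _)
  have hsummable : Summable fun i ↦ inner ℝ x (v i) ^ 2 := by
    simpa only [real_inner_comm, norm_eq_abs, sq_abs] using hv.inner_products_summable (x := x)
  have hbessel : ∑' i, inner ℝ x (v i) ^ 2 ≤ ‖x‖ ^ 2 := by
    simpa only [real_inner_comm, norm_eq_abs, sq_abs] using hv.tsum_inner_products_le x
  have hle : ∀ i, w i * inner ℝ x (v i) ^ 2 ≤ K * inner ℝ x (v i) ^ 2 :=
    fun i ↦ by gcongr; exact hwK i
  have hsummable_w : Summable fun i ↦ w i * inner ℝ x (v i) ^ 2 :=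
    (hsummable.mul_left K).of_nonneg_of_le (fun i ↦ by have := hw₀ i; positivity) hle
  calc ∑' i, w i * inner ℝ x (v i) ^ 2 ≤ ∑' i, K * inner ℝ x (v i) ^ 2 :=
        hsummable_w.tsum_le_tsum hle (hsummable.mul_left K)
    _ = K * ∑' i, inner ℝ x (v i) ^ 2 := tsum_mul_left
    _ ≤ K * ‖x‖ ^ 2 := by gcongr

theorem rpow_two_sub_inv_div_sq_le_four {η : ℝ} (hη : 1 ≤ η) :
    (2 * η - 1) ^ (2 - 1 / η) / η ^ 2 ≤ 4 := by
  have hη₀ : 0 < η := by linarith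
  rw [div_le_iff₀ (by positivity)]
  calc (2 * η - 1) ^ (2 - 1 / η) ≤ (2 * η - 1) ^ (2 : ℝ) :=
        rpow_le_rpow_of_exponent_le (by linarith) (by simp only [sub_le_self_iff]; positivity)
    _ = (2 * η - 1) ^ 2 := rpow_two _
    _ ≤ 4 * η ^ 2 := by nlinarith

theorem stmt11_general {H : Type*} [NormedAddCommGroup H] [InnerProductSpace ℝ H]
    (v : ℕ → H) (hv : Orthonormal ℝ v) (lam : ℕ → ℝ) (hlam : ∀ j, 0 < lam j)
    (η φ τ : ℝ) (hη : 1 ≤ η) (hφ : 0 < φ)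
    (N : ℕ)
    (X X' : H) (hX : ‖X‖ ≤ τ) (hX' : ‖X'‖ ≤ τ) :
    (∑' j, (lam j)⁻¹ *
        ((N : ℝ)⁻¹ * ((lam j) ^ η / ((lam j) ^ η + φ)) * (inner ℝ (X - X') (v j) : ℝ)) ^ 2
      ≤ τ ^ 2 / ((N : ℝ) ^ 2 * φ ^ (1 / η)) * ((2 * η - 1) ^ (2 - 1 / η) / η ^ 2)) ∧
    τ ^ 2 / ((N : ℝ) ^ 2 * φ ^ (1 / η)) * ((2 * η - 1) ^ (2 - 1 / η) / η ^ 2)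
      ≤ 4 * τ ^ 2 / ((N : ℝ) ^ 2 * φ ^ (1 / η)) := by
  set C := (2 * η - 1) ^ (2 - 1 / η) / η ^ 2
  have hC : 0 ≤ C := div_nonneg (rpow_nonneg (by linarith) _) (sq_nonneg η)
  have hdiff : ‖X - X'‖ ≤ 2 * τ := (norm_sub_le X X').trans (by linarith)
  refine ⟨?_, ?_⟩
  · have hbound := hv.tsum_mul_inner_sq_le (K := (N : ℝ)⁻¹ ^ 2 * (C / (4 * φ ^ (1 / η))))
      (w := fun j ↦ (N : ℝ)⁻¹ ^ 2 * ((lam j)⁻¹ * (lam j ^ η / (lam j ^ η + φ)) ^ 2))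
      (fun j ↦ by have := hlam j; positivity)
      (fun j ↦ by gcongr; exact inv_mul_div_rpow_add_sq_le (hlam j) (by linarith) hφ) (X - X')
    calc _ = ∑' j, (N : ℝ)⁻¹ ^ 2 * ((lam j)⁻¹ * (lam j ^ η / (lam j ^ η + φ)) ^ 2)
            * inner ℝ (X - X') (v j) ^ 2 := tsum_congr fun j ↦ by ring
      _ ≤ (N : ℝ)⁻¹ ^ 2 * (C / (4 * φ ^ (1 / η))) * ‖X - X'‖ ^ 2 := hbound
      _ ≤ (N : ℝ)⁻¹ ^ 2 * (C / (4 * φ ^ (1 / η))) * (2 * τ) ^ 2 := by gcongr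
      _ = _ := by ring
  · calc _ ≤ τ ^ 2 / ((N : ℝ) ^ 2 * φ ^ (1 / η)) * 4 := by
          gcongr; exact rpow_two_sub_inv_div_sq_le_four hη
      _ = _ := by ring

theorem stmt11 {H : Type*} [NormedAddCommGroup H] [InnerProductSpace ℝ H]
    (v : ℕ → H) (hv : Orthonormal ℝ v) (lam : ℕ → ℝ) (hlam : ∀ j, 0 < lam j)
    (η φ τ : ℝ) (hη : 1 ≤ η) (hφ : 0 < φ) (hτ : 0 < τ)
    (N : ℕ) (hN : 0 < N)
    (X X' : H) (hX : ‖X‖ ≤ τ) (hX' : ‖X'‖ ≤ τ) :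
    (∑' j, (lam j)⁻¹ *
        ((N : ℝ)⁻¹ * ((lam j) ^ η / ((lam j) ^ η + φ)) * (inner ℝ (X - X') (v j) : ℝ)) ^ 2
      ≤ τ ^ 2 / ((N : ℝ) ^ 2 * φ ^ (1 / η)) * ((2 * η - 1) ^ (2 - 1 / η) / η ^ 2)) ∧
    τ ^ 2 / ((N : ℝ) ^ 2 * φ ^ (1 / η)) * ((2 * η - 1) ^ (2 - 1 / η) / η ^ 2)
      ≤ 4 * τ ^ 2 / ((N : ℝ) ^ 2 * φ ^ (1 / η)) :=
  stmt11_general v hv lam hlam η φ τ hη hφ N X X' hX hX'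
end

section
/- For the Gaussian mechanism in ℝ: let f_D, f_{D′} ∈ ℝ with |f_D − f_{D′}| ≤ Δ, let ε ∈ (0,1], δ ∈ (0,1), and σ² ≥ 2 log(2/δ) Δ²/ε². Then for Z ∼ N(0,1), the random variables f̃_D = f_D + σZ and f̃_{D′} = f_{D′} + σZ satisfy P(f̃_D ∈ A) ≤ e^ε P(f̃_{D′} ∈ A) + δ for every Borel set A ⊆ ℝ. -/
set_option maxHeartbeats 1000000
open MeasureTheory ProbabilityTheory Real
open scoped NNReal

lemma pdf_le_aux (μ₁ μ₂ : ℝ) (v : ℝ≥0) (hv : 0 < (v:ℝ)) (t x : ℝ)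
    (h : (x - μ₂)^2 - (x - μ₁)^2 ≤ 2 * v * t) :
    gaussianPDFReal μ₁ v x ≤ Real.exp t * gaussianPDFReal μ₂ v x := by
  unfold gaussianPDFReal
  have h2v : (0:ℝ) < 2 * v := by positivity
  have key : Real.exp (-(x-μ₁)^2/(2*v)) ≤ Real.exp t * Real.exp (-(x-μ₂)^2/(2*v)) := by
    rw [← Real.exp_add, Real.exp_le_exp]
    have e : t + -(x-μ₂)^2/(2*(v:ℝ)) = (2*v*t + -(x-μ₂)^2)/(2*v) := by field_simp
    rw [e, div_le_div_iff₀ h2v h2v]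
    nlinarith [h, h2v]
  calc (Real.sqrt (2*π*v))⁻¹ * Real.exp (-(x-μ₁)^2/(2*v))
      ≤ (Real.sqrt (2*π*v))⁻¹ * (Real.exp t * Real.exp (-(x-μ₂)^2/(2*v))) := by
        have : (0:ℝ) ≤ (Real.sqrt (2*π*(v:ℝ)))⁻¹ := by positivity
        exact mul_le_mul_of_nonneg_left key this
    _ = Real.exp t * ((Real.sqrt (2*π*v))⁻¹ * Real.exp (-(x-μ₂)^2/(2*v))) := by ring

lemma gauss_comp (μ₁ μ₂ : ℝ) {v : ℝ≥0} (hv : v ≠ 0) (K : ℝ) (hK : 0 ≤ K) (S : Set ℝ)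
    (h : ∀ x ∈ S, gaussianPDFReal μ₁ v x ≤ K * gaussianPDFReal μ₂ v x) :
    gaussianReal μ₁ v S ≤ ENNReal.ofReal K * gaussianReal μ₂ v S := by
  rw [gaussianReal_apply _ hv, gaussianReal_apply _ hv,
    ← lintegral_const_mul _ (measurable_gaussianPDF _ _)]
  refine setLIntegral_mono ((measurable_const.mul (measurable_gaussianPDF _ _))) fun x hx => ?_
  show ENNReal.ofReal _ ≤ ENNReal.ofReal K * ENNReal.ofReal _
  rw [← ENNReal.ofReal_mul hK]
  exact ENNReal.ofReal_le_ofReal (h x hx)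

lemma arith_main (Δ ε δ σ aa L c : ℝ) (hΔ : 0 < Δ) (hε0 : 0 < ε) (hε1 : ε ≤ 1)
    (hδ0 : 0 < δ) (hδ1 : δ < 1) (hs : 0 < σ^2)
    (hL : L = Real.log 2 - Real.log δ) (hlogδ : Real.log δ < 0)
    (hs2 : 2*L*Δ^2 ≤ ε^2*σ^2) (ha2 : aa ≤ Δ^2) (ha0 : 0 < aa)
    (hc : c = ε*σ^2 - aa/2) :
    2*σ^2*(-Real.log δ)*aa ≤ c^2 := by
  have hlog2 : (0.6931471803 : ℝ) < Real.log 2 := Real.log_two_gt_d9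
  have hLpos : 0 < L := by rw [hL]; linarith
  have h0 : 2*L*aa ≤ 2*L*Δ^2 := by nlinarith
  have h1 : 0 ≤ σ^2*(ε^2*σ^2 - 2*L*aa) := mul_nonneg hs.le (by linarith)
  have h2 : 0 ≤ aa*(σ^2*(2*Real.log 2 - ε)) :=
    mul_nonneg ha0.le (mul_nonneg hs.le (by linarith))
  subst hc hL
  nlinarith [h1, h2, sq_nonneg aa]

theorem stmt15 (fD fD' Δ ε δ σ : ℝ) (hΔ : 0 < Δ) (hdiff : |fD - fD'| ≤ Δ)
    (hε : ε ∈ Set.Ioc (0 : ℝ) 1) (hδ : δ ∈ Set.Ioo (0 : ℝ) 1)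
    (hσ : 0 < σ) (hσ2 : 2 * Real.log (2 / δ) * Δ ^ 2 / ε ^ 2 ≤ σ ^ 2) :
    ∀ A : Set ℝ, MeasurableSet A →
      gaussianReal fD ⟨σ ^ 2, sq_nonneg σ⟩ A ≤
        ENNReal.ofReal (Real.exp ε) * gaussianReal fD' ⟨σ ^ 2, sq_nonneg σ⟩ A +
          ENNReal.ofReal δ := by
  intro A hA
  obtain ⟨hε0, hε1⟩ := hε
  obtain ⟨hδ0, hδ1⟩ := hδ
  have hs : (0:ℝ) < σ ^ 2 := by positivity
  set v : ℝ≥0 := ⟨σ ^ 2, sq_nonneg σ⟩ with hvdef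
  have hvr : (v:ℝ) = σ ^ 2 := rfl
  have hv : v ≠ 0 := by
    intro h
    rw [← NNReal.coe_eq_zero, hvr] at h
    exact hs.ne' h
  obtain ⟨a, ha⟩ : ∃ a : ℝ, a = fD - fD' := ⟨_, rfl⟩
  obtain ⟨L, hLd⟩ : ∃ L : ℝ, L = Real.log (2 / δ) := ⟨_, rfl⟩
  have hlogδ : Real.log δ < 0 := Real.log_neg hδ0 hδ1
  have hL : L = Real.log 2 - Real.log δ := by rw [hLd]; exact Real.log_div two_ne_zero hδ0.ne'
  have hlog2 : (0.6931471803 : ℝ) < Real.log 2 := Real.log_two_gt_d9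
  have hs2 : 2 * L * Δ ^ 2 ≤ ε ^ 2 * σ ^ 2 := by
    rw [hLd]
    rw [div_le_iff₀ (by positivity)] at hσ2
    linarith
  have ha2 : a ^ 2 ≤ Δ ^ 2 := by
    rw [ha, ← sq_abs]
    exact pow_le_pow_left₀ (abs_nonneg _) hdiff 2
  obtain ⟨c, hc'⟩ : ∃ c : ℝ, c = ε * σ ^ 2 - a ^ 2 / 2 := ⟨_, rfl⟩
  have hc : 0 < c := by
    have hLpos : 0 < L := by rw [hL]; linarith
    have h1 : ε ^ 2 * σ ^ 2 ≤ ε * σ ^ 2 :=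
      mul_le_mul_of_nonneg_right (by nlinarith : ε ^ 2 ≤ ε) hs.le
    have h2 : 2 * Real.log 2 * Δ ^ 2 ≤ 2 * L * Δ ^ 2 := by nlinarith
    nlinarith [sq_nonneg Δ]
  set B : Set ℝ := {x | c < a * (x - fD)} with hBdef
  -- Step 1
  have step1 : gaussianReal fD v (A ∩ Bᶜ) ≤
      ENNReal.ofReal (Real.exp ε) * gaussianReal fD' v (A ∩ Bᶜ) := by
    refine gauss_comp fD fD' hv (Real.exp ε) (Real.exp_pos ε).le (A ∩ Bᶜ) fun x hx => ?_
    have hxB : ¬ (c < a * (x - fD)) := hx.2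
    push_neg at hxB
    refine pdf_le_aux fD fD' v (by rw [hvr]; exact hs) ε x ?_
    rw [hvr]
    rw [hc', ha] at hxB
    nlinarith [hxB]
  -- Step 2
  have step2 : gaussianReal fD v B ≤ ENNReal.ofReal δ := by
    by_cases ha0 : a = 0
    · have hBempty : B = ∅ := by
        ext x
        simp only [hBdef, Set.mem_setOf_eq, Set.mem_empty_iff_false, iff_false, not_lt, ha0,
          zero_mul]
        exact hc.le
      simp [hBempty]
    · obtain ⟨m, hm⟩ : ∃ m : ℝ, m = c / a := ⟨_, rfl⟩
      have key : gaussianReal fD v B ≤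
          ENNReal.ofReal (Real.exp (-m ^ 2 / (2 * σ ^ 2))) * gaussianReal (fD + m) v B := by
        refine gauss_comp fD (fD + m) hv _ (Real.exp_pos _).le B fun x hx => ?_
        have hxB : c < a * (x - fD) := hx
        refine pdf_le_aux fD (fD + m) v (by rw [hvr]; exact hs) _ x ?_
        rw [hvr]
        have hmm : m ^ 2 ≤ m * (x - fD) := by
          have e : m * (x - fD) - m ^ 2 = (c / a ^ 2) * (a * (x - fD) - c) := by
            rw [hm]; field_simp
          nlinarith [mul_nonneg (div_nonneg hc.le (sq_nonneg a))
            (sub_nonneg.mpr hxB.le), e]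
        have e2 : 2 * σ ^ 2 * (-m ^ 2 / (2 * σ ^ 2)) = -m ^ 2 := by field_simp
        rw [e2]
        nlinarith [hmm]
      have hδbound : Real.exp (-m ^ 2 / (2 * σ ^ 2)) ≤ δ := by
        rw [← Real.exp_log hδ0, Real.exp_le_exp,
          div_le_iff₀ (by positivity : (0:ℝ) < 2 * σ ^ 2)]
        have ha2pos : 0 < a ^ 2 := by positivity
        have main : 2 * σ ^ 2 * (-Real.log δ) * a ^ 2 ≤ c ^ 2 :=
          arith_main Δ ε δ σ (a ^ 2) L c hΔ hε0 hε1 hδ0 hδ1 hs hL hlogδ hs2 ha2 ha2pos hc'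
        have hm2 : m ^ 2 * a ^ 2 = c ^ 2 := by rw [hm]; field_simp
        nlinarith [main, hm2, ha2pos, hs, sq_nonneg m]
      calc gaussianReal fD v B
          ≤ ENNReal.ofReal (Real.exp (-m ^ 2 / (2 * σ ^ 2))) * gaussianReal (fD + m) v B := key
        _ ≤ ENNReal.ofReal (Real.exp (-m ^ 2 / (2 * σ ^ 2))) * 1 := by
            gcongr; exact prob_le_one
        _ ≤ ENNReal.ofReal δ := by
            rw [mul_one]; exact ENNReal.ofReal_le_ofReal hδbound
  calc gaussianReal fD v A ≤ gaussianReal fD v ((A ∩ Bᶜ) ∪ B) := by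
        refine measure_mono fun x hx => ?_
        by_cases hxB : x ∈ B
        · exact Or.inr hxB
        · exact Or.inl ⟨hx, hxB⟩
    _ ≤ gaussianReal fD v (A ∩ Bᶜ) + gaussianReal fD v B := by exact measure_union_le (A ∩ Bᶜ) B
    _ ≤ ENNReal.ofReal (Real.exp ε) * gaussianReal fD' v (A ∩ Bᶜ) + ENNReal.ofReal δ := add_le_add step1 step2
    _ ≤ ENNReal.ofReal (Real.exp ε) * gaussianReal fD' v A + ENNReal.ofReal δ :=
        add_le_add (mul_le_mul_right (measure_mono Set.inter_subset_left) _) le_rfl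
end
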